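/- arXiv:2208.09851 — 10 statements merged into one kernel-verified Lean document; each statement's English description precedes it below -/
import Mathlib

section
/- Let f be a deterministic mechanism in an environment where each agent's admissible domain is the set of all complete, transitive, reflexive preference orderings on A_i × Z. Then f satisfies No Brexit Anomaly if and only if for every agent i and all distinct actions r_i, ℓ_i ∈ A_i: whenever f(r_i, a_{-i}) = f(ℓ_i, a_{-i}) = z for some profile a_{-i} of others' actions and some outcome z, it holds that f(r_i, b_{-i}) = f(ℓ_i, b_{-i}) = z for all profiles b_{-i} of others' actions. -/
/-- A complete, transitive, reflexive preference ordering on `α`. -/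
structure Pref (α : Type*) where
  rel : α → α → Prop
  total : ∀ x y, rel x y ∨ rel y x
  trans : ∀ x y z, rel x y → rel y z → rel x z
  refl : ∀ x, rel x x

/-- Strict preference derived from a preference ordering. -/
def StrictPref {α : Type*} (P : Pref α) (x y : α) : Prop := P.rel x y ∧ ¬ P.rel y x

/-- Brexit Anomaly for a deterministic mechanism `f`, with admissible domains `D`. -/
def BrexitAnomaly {ι : Type*} [DecidableEq ι] {A : ι → Type*} {Z : Type*}
    (f : (∀ j, A j) → Z) (D : ∀ i, Set (Pref (A i × Z))) : Prop :=
  ∃ (i : ι) (r ℓ : A i) (a b : ∀ j, A j) (P : Pref (A i × Z)),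
    P ∈ D i ∧ r ≠ ℓ ∧ (∃ j, j ≠ i ∧ a j ≠ b j) ∧
    f (Function.update a i r) = f (Function.update a i ℓ) ∧
    StrictPref P (ℓ, f (Function.update a i ℓ)) (r, f (Function.update a i r)) ∧
    ∀ x : A i, P.rel (r, f (Function.update b i r)) (x, f (Function.update b i x))

/-- Auxiliary: if two distinct actions tie at outcome `z` at profile `a`, but `r`
gives a different outcome at `b` (and `b` differs from `a` off `i`), we can build a
preference exhibiting a Brexit Anomaly. -/
lemma buildBA {ι : Type*} [DecidableEq ι] {A : ι → Type*} {Z : Type*}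
    (f : (∀ j, A j) → Z) (i : ι) (r ℓ : A i) (hrl : r ≠ ℓ)
    (a b : ∀ j, A j) (z : Z)
    (hdiff : ∃ j, j ≠ i ∧ a j ≠ b j)
    (har : f (Function.update a i r) = z) (hal : f (Function.update a i ℓ) = z)
    (hbr : f (Function.update b i r) ≠ z) :
    BrexitAnomaly f (fun i => (Set.univ : Set (Pref (A i × Z)))) := by
  classical
  set w := f (Function.update b i r) with hw
  let u : A i × Z → ℕ := fun p => if p = (r, w) ∨ p = (ℓ, z) then 1 else 0
  refine ⟨i, r, ℓ, a, b,
    ⟨fun x y => u y ≤ u x, fun x y => le_total _ _,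
     fun x y z hxy hyz => le_trans hyz hxy, fun x => le_refl _⟩,
    trivial, hrl, hdiff, by rw [har, hal], ?_, ?_⟩
  · rw [har, hal]
    have huℓ : u (ℓ, z) = 1 := by simp [u]
    have hur : u (r, z) = 0 := by
      have h1 : (r, z) ≠ (r, w) := by
        intro h; exact hbr (congrArg Prod.snd h).symm
      have h2 : ((r, z) : A i × Z) ≠ (ℓ, z) := by
        intro h; exact hrl (congrArg Prod.fst h)
      simp [u, h1, h2]
    constructor
    · show u (r, z) ≤ u (ℓ, z); rw [huℓ, hur]; omega
    · show ¬ u (ℓ, z) ≤ u (r, z); rw [huℓ, hur]; omega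
  · intro x
    show u (x, f (Function.update b i x)) ≤ u (r, w)
    have : u (r, w) = 1 := by simp [u]
    rw [this]
    simp only [u]
    split <;> omega

/-- Proposition 1: with the unrestricted domain, `f` satisfies NBA iff whenever two
distinct own-actions give the same outcome `z` at some profile of others' actions, they
give that same outcome `z` at every profile of others' actions. -/
theorem nba_iff_structural_condition
    {ι : Type*} [DecidableEq ι] {A : ι → Type*} {Z : Type*}
    (f : (∀ j, A j) → Z) :
    ¬ BrexitAnomaly f (fun i => (Set.univ : Set (Pref (A i × Z)))) ↔
      ∀ (i : ι) (r ℓ : A i), r ≠ ℓ →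
        ∀ (a : ∀ j, A j) (z : Z),
          f (Function.update a i r) = z → f (Function.update a i ℓ) = z →
          ∀ b : ∀ j, A j,
            f (Function.update b i r) = z ∧ f (Function.update b i ℓ) = z := by
  classical
  constructor
  · intro hNBA i r ℓ hrl a z har hal b
    by_contra hcon
    have hdiff : ∃ j, j ≠ i ∧ a j ≠ b j := by
      by_contra h
      push_neg at h
      have heq : ∀ (x : A i), Function.update a i x = Function.update b i x := by
        intro x; funext j
        by_cases hj : j = i
        · subst hj; simp
        · simp [Function.update_of_ne hj, h j hj]
      exact hcon ⟨by rw [← heq]; exact har, by rw [← heq]; exact hal⟩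
    by_cases hbr : f (Function.update b i r) = z
    · have hbl : f (Function.update b i ℓ) ≠ z := fun h => hcon ⟨hbr, h⟩
      exact hNBA (buildBA f i ℓ r (Ne.symm hrl) a b z hdiff hal har hbl)
    · exact hNBA (buildBA f i r ℓ hrl a b z hdiff har hal hbr)
  · rintro hstruct ⟨i, r, ℓ, a, b, P, -, hrl, hj, heq, hstrict, hopt⟩
    obtain ⟨h1, h2⟩ := hstruct i r ℓ hrl a (f (Function.update a i r)) rfl heq.symm b
    have := hopt ℓ
    rw [h1, h2] at this
    rw [← heq] at hstrict
    exact hstrict.2 this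
end

section
/- Let f be a deterministic mechanism in an environment where each agent's admissible domain is the set of all strict (i.e., antisymmetric) preference orderings on A_i × Z, and suppose each A_i × Z has at least two elements so strict orderings exist. Then f satisfies No Brexit Anomaly if and only if for every agent i and all distinct actions r_i, ℓ_i ∈ A_i: f(r_i, a_{-i}) = f(ℓ_i, a_{-i}) = z for some a_{-i} and z implies f(r_i, b_{-i}) = f(ℓ_i, b_{-i}) = z for all b_{-i}. -/
/-- The domain of strict (antisymmetric) preference orderings on `α`. -/
def StrictDomain (α : Type*) : Set (Pref α) :=
  {P | ∀ x y, P.rel x y → P.rel y x → x = y}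

section Promo

variable {α : Type*}

/-- A linear order on `α`, from the well-ordering theorem. -/
noncomputable def baseLO (α : Type*) : LinearOrder α := (exists_wellOrder α).choose

/-- The total order obtained from the base linear order by promoting `t₁` to the
top and `t₂` to second place. -/
noncomputable def promo (t₁ t₂ : α) : Pref α where
  rel x y := x = t₁ ∨ (y ≠ t₁ ∧ (x = t₂ ∨ (y ≠ t₂ ∧ (baseLO α).le x y)))
  total x y := by
    classical
    by_cases hx1 : x = t₁
    · exact Or.inl (Or.inl hx1)
    by_cases hy1 : y = t₁
    · exact Or.inr (Or.inl hy1)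
    by_cases hx2 : x = t₂
    · exact Or.inl (Or.inr ⟨hy1, Or.inl hx2⟩)
    by_cases hy2 : y = t₂
    · exact Or.inr (Or.inr ⟨hx1, Or.inl hy2⟩)
    rcases (baseLO α).le_total x y with h | h
    · exact Or.inl (Or.inr ⟨hy1, Or.inr ⟨hy2, h⟩⟩)
    · exact Or.inr (Or.inr ⟨hx1, Or.inr ⟨hx2, h⟩⟩)
  trans x y z hxy hyz := by
    rcases hxy with h | ⟨hy1, hxy⟩
    · exact Or.inl h
    rcases hyz with h | ⟨hz1, hyz⟩
    · exact absurd h hy1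
    refine Or.inr ⟨hz1, ?_⟩
    rcases hxy with h | ⟨hy2, hxy⟩
    · exact Or.inl h
    rcases hyz with h | ⟨hz2, hyz⟩
    · exact absurd h hy2
    exact Or.inr ⟨hz2, (baseLO α).le_trans _ _ _ hxy hyz⟩
  refl x := by
    classical
    by_cases hx1 : x = t₁
    · exact Or.inl hx1
    by_cases hx2 : x = t₂
    · exact Or.inr ⟨hx1, Or.inl hx2⟩
    · exact Or.inr ⟨hx1, Or.inr ⟨hx2, (baseLO α).le_refl x⟩⟩

theorem promo_mem (t₁ t₂ : α) : promo t₁ t₂ ∈ StrictDomain α := by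
  intro x y hxy hyx
  rcases hxy with h | ⟨hy1, hxy⟩
  · rcases hyx with h' | ⟨hx1, _⟩
    · exact h.trans h'.symm
    · exact absurd h hx1
  rcases hyx with h' | ⟨hx1, hyx⟩
  · exact absurd h' hy1
  rcases hxy with h | ⟨hy2, hxy⟩
  · rcases hyx with h' | ⟨hx2, _⟩
    · exact h.trans h'.symm
    · exact absurd h hx2
  rcases hyx with h' | ⟨hx2, hyx⟩
  · exact absurd h' hy2
  exact (baseLO α).le_antisymm _ _ hxy hyx

theorem promo_top (t₁ t₂ : α) (x : α) : (promo t₁ t₂).rel t₁ x := Or.inl rfl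

theorem promo_second (t₁ t₂ : α) (x : α) (hx : x ≠ t₁) :
    (promo t₁ t₂).rel t₂ x := Or.inr ⟨hx, Or.inl rfl⟩

theorem promo_not_rel_top (t₁ t₂ : α) (x : α) (hx : x ≠ t₁) :
    ¬ (promo t₁ t₂).rel x t₁ := by
  rintro (h | ⟨h1, _⟩)
  · exact hx h
  · exact h1 rfl

theorem promo_not_rel_second (t₁ t₂ : α) (x : α) (hx1 : x ≠ t₁) (hx2 : x ≠ t₂)
    (_h12 : t₂ ≠ t₁) : ¬ (promo t₁ t₂).rel x t₂ := by
  rintro (h | ⟨_, h | ⟨h2, _⟩⟩)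
  · exact hx1 h
  · exact hx2 h
  · exact h2 rfl

end Promo

/-- With the domain of all strict preference orderings (each `A i × Z` having at least
two elements), `f` satisfies NBA iff the structural condition holds. -/
theorem nba_iff_structural_condition_strict
    {ι : Type*} [DecidableEq ι] {A : ι → Type*} {Z : Type*}
    [∀ i, Nontrivial (A i × Z)]
    (f : (∀ j, A j) → Z) :
    ¬ BrexitAnomaly f (fun i => StrictDomain (A i × Z)) ↔
      ∀ (i : ι) (r ℓ : A i), r ≠ ℓ →
        ∀ (a : ∀ j, A j) (z : Z),
          f (Function.update a i r) = z → f (Function.update a i ℓ) = z →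
          ∀ b : ∀ j, A j,
            f (Function.update b i r) = z ∧ f (Function.update b i ℓ) = z := by
  constructor
  · -- NBA → structural condition
    intro hnba i r ℓ hrl a z har hal b
    by_contra hcon
    -- First: b must differ from a at some coordinate ≠ i
    by_cases hdiff : ∃ j, j ≠ i ∧ a j ≠ b j
    · -- build a Brexit anomaly
      apply hnba
      push_neg at hcon
      by_cases hbr : f (Function.update b i r) = z
      · -- then f (update b i ℓ) ≠ z; promote (ℓ,z) then (r,z)
        have hbl : f (Function.update b i ℓ) ≠ z := hcon hbr
        refine ⟨i, r, ℓ, a, b, promo (ℓ, z) (r, z), promo_mem _ _, hrl, hdiff,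
          by rw [har, hal], ?_, ?_⟩
        · rw [har, hal]
          exact ⟨promo_top _ _ _, promo_not_rel_top _ _ _ (by
            intro h; exact hrl (congrArg Prod.fst h))⟩
        · intro x
          rw [hbr]
          refine promo_second _ _ _ ?_
          intro h
          have hx : x = ℓ := congrArg Prod.fst h
          subst hx
          exact hbl (congrArg Prod.snd h)
      · -- f (update b i r) ≠ z; promote (r, w) then (ℓ, z)
        set w := f (Function.update b i r) with hw
        refine ⟨i, r, ℓ, a, b, promo (r, w) (ℓ, z), promo_mem _ _, hrl, hdiff,
          by rw [har, hal], ?_, ?_⟩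
        · rw [har, hal]
          constructor
          · exact promo_second _ _ _ (by
              intro h; exact hbr (congrArg Prod.snd h).symm)
          · exact promo_not_rel_second _ _ _
              (by intro h; exact hbr (congrArg Prod.snd h).symm)
              (by intro h; exact hrl (congrArg Prod.fst h))
              (by intro h; exact hrl (congrArg Prod.fst h).symm)
        · intro x
          exact promo_top _ _ _
    · -- updates of a and b coincide, contradiction
      push_neg at hdiff
      have hup : ∀ x : A i, Function.update a i x = Function.update b i x := by
        intro x
        funext j
        by_cases hj : j = i
        · subst hj; simp
        · simp [Function.update_of_ne hj]
          exact hdiff j hj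
      exact hcon ⟨by rw [← hup]; exact har, by rw [← hup]; exact hal⟩
  · -- structural condition → NBA
    rintro hstruct ⟨i, r, ℓ, a, b, P, hP, hrl, _, heq, hstrict, hmax⟩
    obtain ⟨hbr, hbl⟩ := hstruct i r ℓ hrl a (f (Function.update a i r)) rfl heq.symm b
    have h1 := hmax ℓ
    rw [hbr, hbl] at h1
    rw [← heq] at hstrict
    exact hstrict.2 h1
end

section
/- In the simple voting environment with at least two voters and at least two candidates, where each voter's admissible preference domain is the set of all complete, transitive, reflexive preference orderings on A_i × Z, every mechanism f satisfying unanimity and monotonicity suffers from Brexit Anomaly. -/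
/-- An action in simple voting: `none` is abstention, `some z` is a vote for candidate `z`. -/
abbrev VoteAction (m : ℕ) := Option (Fin m)

/-- Brexit Anomaly in the simple voting environment, with the unrestricted domain of
complete, transitive, reflexive preference orderings. -/
def VoteBA (n m : ℕ) (f : (Fin n → VoteAction m) → Fin m) : Prop :=
  ∃ (i : Fin n) (r ℓ : VoteAction m) (a b : Fin n → VoteAction m)
    (P : Pref (VoteAction m × Fin m)),
    r ≠ ℓ ∧ (∃ j, j ≠ i ∧ a j ≠ b j) ∧
    f (Function.update a i r) = f (Function.update a i ℓ) ∧
    StrictPref P (ℓ, f (Function.update a i ℓ)) (r, f (Function.update a i r)) ∧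
    ∀ x : VoteAction m, P.rel (r, f (Function.update b i r)) (x, f (Function.update b i x))

/-! An abstention that changes a unanimous outcome to some `c ≠ z` gives another voter a
useless choice between voting `z` and voting `c` (monotonicity makes both yield `c`), while at
the unanimous profile voting `z` is decisive. If no abstention changes a unanimous outcome, the
abstainer faces the same kind of collision between abstaining and voting `z` at the profile
unanimous for `z`, and abstaining is decisive at the profile unanimous for another candidate.
In both cases a preference ranking the decisive (action, outcome) pair first and the wasted
pair in the collision last exhibits the anomaly. -/

namespace Pref

variable {α : Type*}

def ofUtility (u : α → ℕ) : Pref α where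
  rel x y := u y ≤ u x
  total x y := le_total (u y) (u x)
  trans _ _ _ hxy hyz := hyz.trans hxy
  refl _ := le_rfl

theorem rel_ofUtility {u : α → ℕ} {x y : α} : (ofUtility u).rel x y ↔ u y ≤ u x := Iff.rfl

theorem strictPref_ofUtility {u : α → ℕ} {x y : α} : StrictPref (ofUtility u) x y ↔ u y < u x :=
  lt_iff_le_not_ge.symm

theorem exists_strictPref_and_forall_rel [DecidableEq α] {x y t : α} (hyx : y ≠ x)
    (hyt : y ≠ t) : ∃ P : Pref α, StrictPref P x y ∧ ∀ w, P.rel t w := by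
  refine ⟨ofUtility fun w => if w = t then 2 else if w = y then 0 else 1, ?_, fun w => ?_⟩
  · rw [strictPref_ofUtility]
    split_ifs <;> simp_all
  · rw [rel_ofUtility, if_pos rfl]
    split_ifs <;> omega

end Pref

section Voting

open Function

variable {n m : ℕ} {f : (Fin n → VoteAction m) → Fin m}

theorem voteBA_of_collision (i : Fin n) {r ℓ : VoteAction m} {a b : Fin n → VoteAction m}
    (hrℓ : r ≠ ℓ) (hab : ∃ j, j ≠ i ∧ a j ≠ b j)
    (hcoll : f (update a i r) = f (update a i ℓ))
    (hdec : f (update b i r) ≠ f (update a i r)) : VoteBA n m f := by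
  classical
  obtain ⟨P, hstrict, htop⟩ := Pref.exists_strictPref_and_forall_rel
    (x := (ℓ, f (update a i ℓ))) (y := (r, f (update a i r))) (t := (r, f (update b i r)))
    (by simp [hrℓ]) (by simp [hdec.symm])
  exact ⟨i, r, ℓ, a, b, P, hrℓ, hab, hcoll, hstrict, fun _ => htop _⟩

def soloAbstention (i : Fin n) (z : Fin m) : Fin n → VoteAction m :=
  update (fun _ => some z) i none

theorem voteBA_of_soloAbstention_ne {i j : Fin n} (hij : i ≠ j) {z : Fin m}
    (unanimity : f (fun _ => some z) = z)
    (monotonicity : ∀ (a : Fin n → VoteAction m) (c : Fin m),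
      f a = c → f (update a j (some c)) = c)
    (habst : f (soloAbstention i z) ≠ z) : VoteBA n m f := by
  set a := soloAbstention i z
  have haj : update a j (some z) = a := by
    simp [a, soloAbstention, hij.symm]
  have hunan : f (update (fun _ => some z) j (some z)) = z := by
    rwa [update_eq_self]
  refine voteBA_of_collision j (r := some z) (ℓ := some (f a)) (a := a) (b := fun _ => some z)
    (by simpa using habst.symm) ⟨i, hij, by simp [a, soloAbstention]⟩ ?_ ?_
  · rw [haj, monotonicity a (f a) rfl]
  · rwa [hunan, haj, ne_comm]

theorem voteBA_of_soloAbstention_eq {i j : Fin n} (hij : i ≠ j) {z w : Fin m} (hzw : z ≠ w)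
    (unanimity : f (fun _ => some z) = z)
    (hz : f (soloAbstention i z) = z) (hw : f (soloAbstention i w) = w) : VoteBA n m f := by
  refine voteBA_of_collision i (r := none) (ℓ := some z) (a := fun _ => some z)
    (b := fun _ => some w) (by simp) ⟨j, hij.symm, by simpa using hzw⟩ ?_ ?_
  · rw [update_eq_self, unanimity]
    exact hz
  · exact hw.trans_ne (hz.trans_ne hzw).symm

end Voting

/-- Proposition 2: with at least two voters and two candidates, every mechanism satisfying
unanimity and monotonicity suffers from Brexit Anomaly. -/
theorem voting_brexit_anomaly (n m : ℕ) (hn : 2 ≤ n) (hm : 2 ≤ m)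
    (f : (Fin n → VoteAction m) → Fin m)
    (unanimity : ∀ z : Fin m, f (fun _ => some z) = z)
    (monotonicity : ∀ (i : Fin n) (a : Fin n → VoteAction m) (z : Fin m),
      f a = z → f (Function.update a i (some z)) = z) :
    VoteBA n m f := by
  let i : Fin n := ⟨0, by omega⟩
  let j : Fin n := ⟨1, by omega⟩
  have hij : i ≠ j := by simp [i, j, Fin.ext_iff]
  let z₀ : Fin m := ⟨0, by omega⟩
  let z₁ : Fin m := ⟨1, by omega⟩
  have hz : z₀ ≠ z₁ := by simp [z₀, z₁, Fin.ext_iff]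
  by_cases h₀ : f (soloAbstention i z₀) = z₀
  · by_cases h₁ : f (soloAbstention i z₁) = z₁
    · exact voteBA_of_soloAbstention_eq hij hz (unanimity z₀) h₀ h₁
    · exact voteBA_of_soloAbstention_ne hij (unanimity z₁) (monotonicity j) h₁
  · exact voteBA_of_soloAbstention_ne hij (unanimity z₀) (monotonicity j) h₀
end

section
/- In the simple voting environment with at least two voters and at least two candidates, if a mechanism f satisfies unanimity and monotonicity, then the structural condition 'f(r_i, a_{-i}) = f(ℓ_i, a_{-i}) = z for some a_{-i} implies f(r_i, b_{-i}) = f(ℓ_i, b_{-i}) = z for all b_{-i}' fails, i.e., there exist a voter i, distinct actions r_i, ℓ_i, distinct profiles a_{-i}, b_{-i}, and an outcome z with f(r_i, a_{-i}) = f(ℓ_i, a_{-i}) = z but (f(r_i, b_{-i}), f(ℓ_i, b_{-i})) ≠ (z, z). -/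
/-- With at least two voters and two candidates, any mechanism satisfying unanimity and
monotonicity violates the structural condition: there exist a voter `i`, distinct actions
`r, ℓ`, distinct profiles of others' actions, and an outcome `z` such that both actions
give `z` at the first profile but not both give `z` at the second. -/
theorem voting_structural_condition_fails (n m : ℕ) (hn : 2 ≤ n) (hm : 2 ≤ m)
    (f : (Fin n → VoteAction m) → Fin m)
    (unanimity : ∀ z : Fin m, f (fun _ => some z) = z)
    (monotonicity : ∀ (i : Fin n) (a : Fin n → VoteAction m) (z : Fin m),
      f a = z → f (Function.update a i (some z)) = z) :
    ∃ (i : Fin n) (r ℓ : VoteAction m) (a b : Fin n → VoteAction m) (z : Fin m),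
      r ≠ ℓ ∧ (∃ j, j ≠ i ∧ a j ≠ b j) ∧
      f (Function.update a i r) = z ∧ f (Function.update a i ℓ) = z ∧
      ¬ (f (Function.update b i r) = z ∧ f (Function.update b i ℓ) = z) := by
  have i0 : Fin n := ⟨0, by omega⟩
  set i0 : Fin n := ⟨0, by omega⟩ with hi0def
  set i1 : Fin n := ⟨1, by omega⟩ with hi1def
  set z0 : Fin m := ⟨0, by omega⟩ with hz0def
  set z1 : Fin m := ⟨1, by omega⟩ with hz1def
  have hi : i0 ≠ i1 := by simp [hi0def, hi1def, Fin.ext_iff]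
  have hz : z0 ≠ z1 := by simp [hz0def, hz1def, Fin.ext_iff]
  set P0 : Fin n → VoteAction m := fun _ => some z0 with hP0def
  set P1 : Fin n → VoteAction m := fun _ => some z1 with hP1def
  have hP0 : f P0 = z0 := unanimity z0
  have hP1 : f P1 = z1 := unanimity z1
  set Q : Fin n → VoteAction m := Function.update P1 i0 none with hQdef
  by_cases hc : f Q = z1
  · set Q' : Fin n → VoteAction m := Function.update P0 i0 none with hQ'def
    by_cases hc' : f Q' = z0
    · -- both abstention profiles behave: use i0, a = P0, b = P1, z = z0
      refine ⟨i0, none, some z0, P0, P1, z0, by simp, ⟨i1, hi.symm, ?_⟩, ?_, ?_, ?_⟩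
      · simp [hP0def, hP1def, hz]
      · exact hc'
      · rw [show Function.update P0 i0 (some z0) = P0 from Function.update_eq_self i0 P0]
        exact hP0
      · intro ⟨h1, _⟩
        rw [← hQdef] at h1
        exact hz (h1 ▸ hc ▸ rfl) -- f Q = z0 and f Q = z1
    · -- f Q' ≠ z0 : use voter i1, a = Q', b = P0, z = f Q'
      have hQ'i1 : Q' i1 = some z0 := by
        rw [hQ'def, Function.update_of_ne hi.symm]
      refine ⟨i1, some z0, some (f Q'), Q', P0, f Q', ?_, ⟨i0, hi, ?_⟩, ?_, ?_, ?_⟩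
      · intro h
        exact hc' (Option.some_injective _ h).symm
      · simp [hQ'def]
      · rw [show Function.update Q' i1 (some z0) = Q' by rw [← hQ'i1]; exact Function.update_eq_self i1 Q']
      · exact monotonicity i1 Q' (f Q') rfl
      · intro ⟨h1, _⟩
        rw [show Function.update P0 i1 (some z0) = P0 from Function.update_eq_self i1 P0, hP0] at h1
        exact hc' h1.symm
  · -- f Q ≠ z1 : use voter i1, a = Q, b = P1, z = f Q
    have hQi1 : Q i1 = some z1 := by
      rw [hQdef, Function.update_of_ne hi.symm]
    refine ⟨i1, some z1, some (f Q), Q, P1, f Q, ?_, ⟨i0, hi, ?_⟩, ?_, ?_, ?_⟩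
    · intro h
      exact hc (Option.some_injective _ h).symm
    · simp [hQdef]
    · rw [show Function.update Q i1 (some z1) = Q by rw [← hQi1]; exact Function.update_eq_self i1 Q]
    · exact monotonicity i1 Q (f Q) rfl
    · intro ⟨h1, _⟩
      rw [show Function.update P1 i1 (some z1) = P1 from Function.update_eq_self i1 P1, hP1] at h1
      exact hc h1.symm
end

section
/- The Groves mechanism for the two-agent queueing problem violates the structural no-anomaly condition: there exist r_1, ℓ_1, a_2, b_2 ∈ [0,1] with f(r_1, a_2) = f(ℓ_1, a_2) but f(r_1, b_2) ≠ f(ℓ_1, b_2). In particular, for any a_2 < r_1 < ℓ_1 < b_2 in [0,1], f(r_1, a_2) = f(ℓ_1, a_2) while the transfer of patient 2 satisfies t_2^f(r_1, b_2) = r_1 ≠ ℓ_1 = t_2^f(ℓ_1, b_2). -/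
open unitInterval

/-- The Groves mechanism for the two-patient queueing problem. Given reports
`(x1, x2) ∈ [0,1]²` it returns the outcome `(w1, t1, w2, t2)`: if `x1 > x2` then
`(0, x2, 1, 0)`, otherwise `(1, 0, 0, x1)`. -/
noncomputable def groves (x1 x2 : unitInterval) : ℝ × ℝ × ℝ × ℝ :=
  if (x2 : ℝ) < (x1 : ℝ) then (0, (x2 : ℝ), 1, 0) else (1, 0, 0, (x1 : ℝ))

/-- The Groves mechanism violates the structural no-anomaly condition: there are reports
`r₁, ℓ₁, a₂, b₂` with `f(r₁,a₂) = f(ℓ₁,a₂)` but `f(r₁,b₂) ≠ f(ℓ₁,b₂)`. In particular, for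
any `a₂ < r₁ < ℓ₁ < b₂` in `[0,1]`, `f(r₁,a₂) = f(ℓ₁,a₂)` while patient 2's transfer
satisfies `t₂(r₁,b₂) = r₁ ≠ ℓ₁ = t₂(ℓ₁,b₂)`. -/
theorem groves_violates_structural_condition :
    (∃ r ℓ a b : unitInterval,
        groves r a = groves ℓ a ∧ groves r b ≠ groves ℓ b) ∧
    (∀ r ℓ a b : unitInterval,
        (a : ℝ) < (r : ℝ) → (r : ℝ) < (ℓ : ℝ) → (ℓ : ℝ) < (b : ℝ) →
        groves r a = groves ℓ a ∧
        (groves r b).2.2.2 = (r : ℝ) ∧ (groves ℓ b).2.2.2 = (ℓ : ℝ) ∧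
        groves r b ≠ groves ℓ b) := by
  have key : ∀ r ℓ a b : unitInterval,
      (a : ℝ) < (r : ℝ) → (r : ℝ) < (ℓ : ℝ) → (ℓ : ℝ) < (b : ℝ) →
      groves r a = groves ℓ a ∧
      (groves r b).2.2.2 = (r : ℝ) ∧ (groves ℓ b).2.2.2 = (ℓ : ℝ) ∧
      groves r b ≠ groves ℓ b := by
    intro r ℓ a b har hrl hlb
    have h1 : groves r a = (0, (a:ℝ), 1, 0) := if_pos har
    have h2 : groves ℓ a = (0, (a:ℝ), 1, 0) := if_pos (har.trans hrl)
    have h3 : groves r b = (1, 0, 0, (r:ℝ)) := if_neg (not_lt.2 (hrl.trans hlb).le)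
    have h4 : groves ℓ b = (1, 0, 0, (ℓ:ℝ)) := if_neg (not_lt.2 hlb.le)
    refine ⟨h1.trans h2.symm, by rw [h3], by rw [h4], ?_⟩
    rw [h3, h4]
    intro h
    exact hrl.ne (congrArg (fun p => p.2.2.2) h)
  refine ⟨?_, key⟩
  refine ⟨⟨1/3, by norm_num⟩, ⟨2/3, by norm_num⟩, ⟨0, by norm_num⟩, ⟨1, by norm_num⟩, ?_⟩
  have := key ⟨1/3, by norm_num⟩ ⟨2/3, by norm_num⟩ ⟨0, by norm_num⟩ ⟨1, by norm_num⟩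
    (by norm_num) (by norm_num) (by norm_num)
  exact ⟨this.1, this.2.2.2⟩
end

section
/- For any true cost θ_1 ∈ (0,1) of patient 1, there exist distinct r_1, ℓ_1 ∈ [0,1] and distinct a_2, b_2 ∈ [0,1] such that, under the Groves mechanism f and patient 1's lexicographic expressive preference ≿_1: (i) f(r_1, a_2) = f(ℓ_1, a_2); (ii) (ℓ_1, f(ℓ_1, a_2)) ≻_1 (r_1, f(r_1, a_2)); and (iii) (r_1, f(r_1, b_2)) ≿_1 (x_1, f(x_1, b_2)) for all x_1 ∈ [0,1]. In particular, one can take any a_2 < ℓ_1 = θ_1 < r_1 = b_2. -/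
open unitInterval

/-- Material payoff of patient 1 at outcome `ω = (w1, t1, w2, t2)`. -/
noncomputable def matPayoff1 (θ1 u : ℝ) (ω : ℝ × ℝ × ℝ × ℝ) : ℝ := u - θ1 * ω.1 - ω.2.1

/-- Total transfers to the clinic at outcome `ω = (w1, t1, w2, t2)`. -/
noncomputable def totalTransfer (ω : ℝ × ℝ × ℝ × ℝ) : ℝ := ω.2.1 + ω.2.2.2

/-- Patient 1's lexicographic expressive weak preference over action-outcome pairs. -/
noncomputable def prefOne (θ1 u : ℝ)
    (p q : unitInterval × (ℝ × ℝ × ℝ × ℝ)) : Prop :=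
  matPayoff1 θ1 u q.2 < matPayoff1 θ1 u p.2 ∨
    (matPayoff1 θ1 u p.2 = matPayoff1 θ1 u q.2 ∧
      (totalTransfer q.2 < totalTransfer p.2 ∨
        (totalTransfer p.2 = totalTransfer q.2 ∧
          |θ1 - (p.1 : ℝ)| ≤ |θ1 - (q.1 : ℝ)|)))

lemma groves_main (θ1 u : ℝ) (h0 : 0 < θ1) (h1 : θ1 < 1)
    (r ℓ a b : unitInterval)
    (ha : (a : ℝ) < θ1) (hℓ : (ℓ : ℝ) = θ1) (hr : θ1 < (r : ℝ)) (hrb : r = b) :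
    groves r a = groves ℓ a ∧
      (prefOne θ1 u (ℓ, groves ℓ a) (r, groves r a) ∧
        ¬ prefOne θ1 u (r, groves r a) (ℓ, groves ℓ a)) ∧
      (∀ x : unitInterval, prefOne θ1 u (r, groves r b) (x, groves x b)) := by
  subst hrb
  have hgr : groves r a = (0, (a:ℝ), 1, 0) := if_pos (ha.trans hr)
  have hgl : groves ℓ a = (0, (a:ℝ), 1, 0) := if_pos (by rw [hℓ]; exact ha)
  have hgrb : groves r r = (1, 0, 0, (r:ℝ)) := if_neg (lt_irrefl _)
  refine ⟨hgr.trans hgl.symm, ⟨?_, ?_⟩, ?_⟩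
  · right
    refine ⟨by rw [hgr, hgl], Or.inr ⟨by rw [hgr, hgl], ?_⟩⟩
    simp only [hℓ, sub_self, abs_zero]
    exact abs_nonneg _
  · intro h
    rcases h with h | ⟨_, h | ⟨_, h⟩⟩
    · rw [hgr, hgl] at h; exact lt_irrefl _ h
    · rw [hgr, hgl] at h; exact lt_irrefl _ h
    · simp only [hℓ, sub_self, abs_zero] at h
      have : θ1 - (r:ℝ) ≠ 0 := by linarith
      exact this (abs_eq_zero.mp (le_antisymm h (abs_nonneg _)))
  · intro x
    by_cases hx : (r : ℝ) < (x : ℝ)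
    · have hgx : groves x r = (0, (r:ℝ), 1, 0) := if_pos hx
      left
      rw [hgrb, hgx]
      simp only [matPayoff1]
      linarith
    · have hgx : groves x r = (1, 0, 0, (x:ℝ)) := if_neg hx
      right
      refine ⟨by rw [hgrb, hgx]; simp [matPayoff1], ?_⟩
      push_neg at hx
      rcases lt_or_eq_of_le hx with hx' | hx'
      · left
        rw [hgrb, hgx]
        simpa [totalTransfer] using hx'
      · right
        refine ⟨by rw [hgrb, hgx, hx'], ?_⟩
        simp [hx']

/-- Proposition 4: for any true cost `θ1 ∈ (0,1)`, the Groves mechanism and patient 1's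
lexicographic expressive preference exhibit conditions (i)-(iii) of the Brexit Anomaly;
in particular one can take any `a₂ < ℓ₁ = θ1 < r₁ = b₂`. -/
theorem groves_brexit_anomaly_conditions (θ1 u : ℝ)
    (hu : 0 < u) (h0 : 0 < θ1) (h1 : θ1 < 1) :
    (∃ r ℓ a b : unitInterval, r ≠ ℓ ∧ a ≠ b ∧
      groves r a = groves ℓ a ∧
      (prefOne θ1 u (ℓ, groves ℓ a) (r, groves r a) ∧
        ¬ prefOne θ1 u (r, groves r a) (ℓ, groves ℓ a)) ∧
      (∀ x : unitInterval, prefOne θ1 u (r, groves r b) (x, groves x b))) ∧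
    (∀ r ℓ a b : unitInterval,
      (a : ℝ) < θ1 → (ℓ : ℝ) = θ1 → θ1 < (r : ℝ) → r = b →
      groves r a = groves ℓ a ∧
      (prefOne θ1 u (ℓ, groves ℓ a) (r, groves r a) ∧
        ¬ prefOne θ1 u (r, groves r a) (ℓ, groves ℓ a)) ∧
      (∀ x : unitInterval, prefOne θ1 u (r, groves r b) (x, groves x b))) := by
  constructor
  · refine ⟨⟨(θ1 + 1) / 2, by constructor <;> linarith⟩,
      ⟨θ1, by constructor <;> linarith⟩,
      ⟨θ1 / 2, by constructor <;> linarith⟩,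
      ⟨(θ1 + 1) / 2, by constructor <;> linarith⟩, ?_, ?_, ?_⟩
    · intro h
      have := congrArg (fun z : unitInterval => (z : ℝ)) h
      simp at this
      linarith
    · intro h
      have := congrArg (fun z : unitInterval => (z : ℝ)) h
      simp at this
    · exact groves_main θ1 u h0 h1 _ _ _ _ (by simp; linarith) rfl
        (by simp; linarith) rfl
  · intro r ℓ a b ha hℓ hr hrb
    exact groves_main θ1 u h0 h1 r ℓ a b ha hℓ hr hrb
end

section
/- Let Z be a finite set with at least two elements and let ≻_i be a strict total order on A_i × Z. For any distinct actions r_i, ℓ_i ∈ A_i, at least one of the following holds: (S1) for all totally mixed g, h ∈ Δ(Z), neither [ℓ_i, g] FSD_i [r_i, h] nor [ℓ_i, h] FSD_i [r_i, g]; or (S2) for all totally mixed g, h ∈ Δ(Z), neither [r_i, g] FSD_i [ℓ_i, h] nor [r_i, h] FSD_i [ℓ_i, g]. -/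
open Classical in
/-- `phi R a g x z` is the probability, under the lottery `g` on outcomes and the chosen
action `a`, of obtaining an action-outcome pair weakly preferred (w.r.t. `R`) to `(x,z)`. -/
noncomputable def phi {A Z : Type*} [Fintype Z] (R : A × Z → A × Z → Prop)
    (a : A) (g : Z → ℝ) (x : A) (z : Z) : ℝ :=
  ∑ z' : Z, if R (a, z') (x, z) then g z' else 0

/-- `[a, g]` first order stochastically dominates `[b, h]` for the preference `R`. -/
def FSD {A Z : Type*} [Fintype Z] (R : A × Z → A × Z → Prop)
    (a : A) (g : Z → ℝ) (b : A) (h : Z → ℝ) : Prop :=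
  (∀ (x : A) (z : Z), phi R b h x z ≤ phi R a g x z) ∧
  ∃ (x : A) (z : Z), phi R b h x z < phi R a g x z

/-- A totally mixed probability distribution on `Z`. -/
def TotallyMixed {Z : Type*} [Fintype Z] (g : Z → ℝ) : Prop :=
  (∀ z, 0 < g z) ∧ ∑ z, g z = 1

private lemma exists_rel_max {Z : Type*} [Fintype Z] [Nonempty Z]
    (r : Z → Z → Prop) (htot : ∀ a b, r a b ∨ r b a)
    (htr : ∀ a b c, r a b → r b c → r a c) :
    ∃ m, ∀ z, r m z := by
  classical
  have key : ∀ s : Finset Z, s.Nonempty → ∃ m ∈ s, ∀ z ∈ s, r m z := by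
    intro s
    induction s using Finset.induction with
    | empty => intro h; simp at h
    | @insert a s _ ih =>
      intro _
      rcases s.eq_empty_or_nonempty with rfl | hs
      · refine ⟨a, by simp, ?_⟩
        intro z hz
        rcases Finset.mem_insert.1 hz with rfl | hz
        · exact (htot z z).elim id id
        · exact absurd hz (Finset.notMem_empty z)
      · obtain ⟨m, hm, hmx⟩ := ih hs
        rcases htot a m with h | h
        · refine ⟨a, Finset.mem_insert_self _ _, ?_⟩
          intro z hz
          rcases Finset.mem_insert.1 hz with rfl | hz
          · exact (htot z z).elim id id
          · exact htr _ _ _ h (hmx z hz)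
        · refine ⟨m, Finset.mem_insert_of_mem hm, ?_⟩
          intro z hz
          rcases Finset.mem_insert.1 hz with rfl | hz
          · exact h
          · exact hmx z hz
  obtain ⟨m, _, hm⟩ := key Finset.univ Finset.univ_nonempty
  exact ⟨m, fun z => hm z (Finset.mem_univ z)⟩

private lemma fsd_key {A Z : Type*} [Fintype Z] [Nonempty Z]
    (R : A × Z → A × Z → Prop)
    (htotal : ∀ p q, R p q ∨ R q p)
    (htrans : ∀ p q s, R p q → R q s → R p s)
    (hanti : ∀ p q, R p q → R q p → p = q)
    (a b : A) (g h : Z → ℝ) (hh : TotallyMixed h)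
    (hfsd : FSD R a g b h) : ∃ z', ∀ z, R (a, z') (b, z) := by
  obtain ⟨m, hm⟩ := exists_rel_max (fun z1 z2 => R (b, z1) (b, z2))
    (fun x y => htotal _ _) (fun x y z => htrans _ _ _)
  have hrefl : R (b, m) (b, m) := (htotal _ _).elim id id
  have hphi : phi R b h b m = h m := by
    unfold phi
    rw [Finset.sum_eq_single m]
    · simp [hrefl]
    · intro z' _ hz'
      have hnr : ¬ R (b, z') (b, m) := fun hc =>
        hz' (congrArg Prod.snd (hanti _ _ hc (hm z')))
      simp [hnr]
    · simp
  have hpos : 0 < phi R a g b m := lt_of_lt_of_le (hphi ▸ hh.1 m) (hfsd.1 b m)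
  by_contra hcon
  push_neg at hcon
  have hzero : phi R a g b m = 0 := by
    unfold phi
    apply Finset.sum_eq_zero
    intro z' _
    have hnr : ¬ R (a, z') (b, m) := by
      intro hR
      obtain ⟨z, hz⟩ := hcon z'
      exact hz (htrans _ _ _ hR (hm z))
    simp [hnr]
  linarith

/-- Lemma 1: for a strict total order `R` on `A × Z` (`Z` finite with at least two
elements) and distinct actions `r, ℓ`, at least one of (S1), (S2) holds. -/
theorem fsd_dichotomy {A Z : Type*} [Fintype Z] [Nontrivial Z]
    (R : A × Z → A × Z → Prop)
    (htotal : ∀ p q, R p q ∨ R q p)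
    (htrans : ∀ p q s, R p q → R q s → R p s)
    (hanti : ∀ p q, R p q → R q p → p = q)
    (r ℓ : A) (hrl : r ≠ ℓ) :
    (∀ g h : Z → ℝ, TotallyMixed g → TotallyMixed h →
        ¬ FSD R ℓ g r h ∧ ¬ FSD R ℓ h r g) ∨
    (∀ g h : Z → ℝ, TotallyMixed g → TotallyMixed h →
        ¬ FSD R r g ℓ h ∧ ¬ FSD R r h ℓ g) := by
  by_cases hP : ∃ z', ∀ z, R (ℓ, z') (r, z)
  · right
    intro g h hg hh
    obtain ⟨z1, hz1⟩ := hP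
    constructor <;> intro hfsd
    · obtain ⟨z2, hz2⟩ := fsd_key R htotal htrans hanti r ℓ g h hh hfsd
      exact hrl (congrArg Prod.fst (hanti _ _ (hz2 z1) (hz1 z2)))
    · obtain ⟨z2, hz2⟩ := fsd_key R htotal htrans hanti r ℓ h g hg hfsd
      exact hrl (congrArg Prod.fst (hanti _ _ (hz2 z1) (hz1 z2)))
  · left
    intro g h hg hh
    constructor <;> intro hfsd
    · exact hP (fsd_key R htotal htrans hanti ℓ r g h hh hfsd)
    · exact hP (fsd_key R htotal htrans hanti ℓ r h g hg hfsd)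
end

section
/- For a strict total order ≻_i on A_i × Z with Z finite and |Z| ≥ 2, conditions (ii) and (iii) of the probabilistic Brexit Anomaly cannot hold simultaneously when all the involved distributions are totally mixed: if [ℓ_i, g] FSD_i [r_i, g] for a totally mixed g, then [r_i, g'] FSD_i [ℓ_i, h'] fails for all totally mixed g', h'. -/
/-- A total transitive relation on a finite nonempty type has a maximum. -/
lemma exists_max_rel {Z : Type*} [Fintype Z] [Nonempty Z] (S : Z → Z → Prop)
    (htot : ∀ a b, S a b ∨ S b a) (htr : ∀ a b c, S a b → S b c → S a c) :
    ∃ z0 : Z, ∀ z, S z0 z := by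
  classical
  have key : ∀ s : Finset Z, s.Nonempty → ∃ z0 ∈ s, ∀ z ∈ s, S z0 z := by
    intro s
    induction s using Finset.induction_on with
    | empty => intro h; exact absurd h (by simp)
    | @insert a s ha ih =>
      intro _
      by_cases hse : s.Nonempty
      · obtain ⟨z0, hz0s, hz0⟩ := ih hse
        rcases htot a z0 with h1 | h1
        · refine ⟨a, Finset.mem_insert_self _ _, fun z hz => ?_⟩
          rcases Finset.mem_insert.1 hz with h' | hz
          · rw [h']; exact (htot a a).elim id id
          · exact htr a z0 z h1 (hz0 z hz)
        · refine ⟨z0, Finset.mem_insert_of_mem hz0s, fun z hz => ?_⟩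
          rcases Finset.mem_insert.1 hz with h' | hz
          · rw [h']; exact h1
          · exact hz0 z hz
      · refine ⟨a, Finset.mem_insert_self _ _, fun z hz => ?_⟩
        rcases Finset.mem_insert.1 hz with h' | hz
        · rw [h']; exact (htot a a).elim id id
        · exact absurd ⟨z, hz⟩ hse
  obtain ⟨z0, _, hz0⟩ := key Finset.univ Finset.univ_nonempty
  exact ⟨z0, fun z => hz0 z (Finset.mem_univ z)⟩

/-- If `phi R a g x z` is positive then some `z'` satisfies `R (a, z') (x, z)`. -/
lemma exists_of_phi_pos {A Z : Type*} [Fintype Z] (R : A × Z → A × Z → Prop)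
    (a : A) (g : Z → ℝ) (x : A) (z : Z) (h : 0 < phi R a g x z) :
    ∃ z', R (a, z') (x, z) := by
  by_contra hc
  push_neg at hc
  have : phi R a g x z = 0 := by
    unfold phi
    exact Finset.sum_eq_zero fun z' _ => by simp [hc z']
  simp [this] at h

/-- Lower bound on `phi` by the mass of a single dominating point. -/
lemma phi_ge {A Z : Type*} [Fintype Z] (R : A × Z → A × Z → Prop)
    (a : A) (g : Z → ℝ) (hg : ∀ z, 0 ≤ g z) (x : A) (z : Z) (z0 : Z)
    (h : R (a, z0) (x, z)) : g z0 ≤ phi R a g x z := by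
  classical
  unfold phi
  have := Finset.single_le_sum (f := fun z' => if R (a, z') (x, z) then g z' else 0)
    (fun z' _ => by by_cases hz' : R (a, z') (x, z) <;> simp [hz', hg z'])
    (Finset.mem_univ z0)
  simpa [h] using this

/-- For a strict total order on `A × Z` (`Z` finite with at least two elements), the BA
conditions (ii) and (iii) cannot hold together with totally mixed distributions: if
`[ℓ, g] FSD [r, g]` for a totally mixed `g`, then `[r, g'] FSD [ℓ, h']` fails for all
totally mixed `g', h'`. -/
theorem fsd_conditions_incompatible {A Z : Type*} [Fintype Z] [Nontrivial Z]
    (R : A × Z → A × Z → Prop)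
    (htotal : ∀ p q, R p q ∨ R q p)
    (htrans : ∀ p q s, R p q → R q s → R p s)
    (hanti : ∀ p q, R p q → R q p → p = q)
    (r ℓ : A) (hrl : r ≠ ℓ)
    (g : Z → ℝ) (hg : TotallyMixed g)
    (hFSD : FSD R ℓ g r g) :
    ∀ g' h' : Z → ℝ, TotallyMixed g' → TotallyMixed h' → ¬ FSD R r g' ℓ h' := by
  intro g' h' hg' hh' hF
  have hrefl : ∀ p, R p p := fun p => (htotal p p).elim id id
  obtain ⟨zℓ, hzℓ⟩ := exists_max_rel (fun a b => R (ℓ, a) (ℓ, b))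
    (fun a b => htotal _ _) (fun a b c => htrans _ _ _)
  obtain ⟨zr, hzr⟩ := exists_max_rel (fun a b => R (r, a) (r, b))
    (fun a b => htotal _ _) (fun a b c => htrans _ _ _)
  -- From hF: some (r, z') is above (ℓ, zℓ)
  have h1 : 0 < phi R r g' ℓ zℓ :=
    lt_of_lt_of_le (lt_of_lt_of_le (hh'.1 zℓ)
      (phi_ge R ℓ h' (fun z => (hh'.1 z).le) ℓ zℓ zℓ (hrefl _))) (hF.1 ℓ zℓ)
  obtain ⟨z', hz'⟩ := exists_of_phi_pos R r g' ℓ zℓ h1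
  -- From hFSD: some (ℓ, z'') is above (r, zr)
  have h2 : 0 < phi R ℓ g r zr :=
    lt_of_lt_of_le (lt_of_lt_of_le (hg.1 zr)
      (phi_ge R r g (fun z => (hg.1 z).le) r zr zr (hrefl _))) (hFSD.1 r zr)
  obtain ⟨z'', hz''⟩ := exists_of_phi_pos R ℓ g r zr h2
  -- Chains: (r, zr) ≿ (r, z') ≿ (ℓ, zℓ) and (ℓ, zℓ) ≿ (ℓ, z'') ≿ (r, zr)
  have hA : R (r, zr) (ℓ, zℓ) := htrans _ _ _ (hzr z') hz'
  have hB : R (ℓ, zℓ) (r, zr) := htrans _ _ _ (hzℓ z'') hz''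
  exact hrl (congrArg Prod.fst (hanti _ _ hA hB))
end

section
/- There exists a completely mixed probabilistic mechanism f with two agents, two actions each, and two outcomes, together with a non-strict (i.e., admitting indifference) preference ordering ≿_1 of agent 1, that exhibits the probabilistic Brexit Anomaly. Concretely, with A_1 = {a⁰, a¹}, A_2 = {b⁰, b¹}, Z = {z⁰, z¹}, f given by f(a⁰,b⁰) = f(a¹,b⁰) = (1/3, 2/3), f(a⁰,b¹) = (1/2, 1/2), f(a¹,b¹) = (3/4, 1/4) (probabilities of (z⁰, z¹)), and ≿_1 given by (a⁰,z¹) ∼ (a¹,z⁰) ≻ (a⁰,z⁰) ∼ (a¹,z¹), one has: (i) f(a⁰,b⁰) = f(a¹,b⁰); (ii) [a⁰, f(a⁰,b⁰)] FSD_1 [a¹, f(a¹,b⁰)]; and (iii) [a¹, f(a¹,b¹)] FSD_1 [a⁰, f(a⁰,b¹)]. -/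
/-- The probabilistic mechanism of Example 1: two agents with actions `Fin 2`, two
outcomes; probabilities of `(z⁰, z¹)` are `(1/3, 2/3)` whenever agent 2 plays `b⁰`,
`(1/2, 1/2)` at `(a⁰, b¹)`, and `(3/4, 1/4)` at `(a¹, b¹)`. -/
noncomputable def fEx : Fin 2 → Fin 2 → (Fin 2 → ℝ) := fun a b =>
  if b = 0 then ![1/3, 2/3] else if a = 0 then ![1/2, 1/2] else ![3/4, 1/4]

/-- Agent 1's non-strict preference on action-outcome pairs:
`(a⁰,z¹) ∼ (a¹,z⁰) ≻ (a⁰,z⁰) ∼ (a¹,z¹)`. -/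
def prefEx (p q : Fin 2 × Fin 2) : Prop :=
  (if q.1 = q.2 then (0 : ℕ) else 1) ≤ (if p.1 = p.2 then (0 : ℕ) else 1)

/-- Example 1: a completely mixed probabilistic mechanism together with a complete,
transitive, non-strict preference of agent 1 exhibiting the probabilistic Brexit Anomaly:
(i) `f(a⁰,b⁰) = f(a¹,b⁰)`; (ii) `[a⁰, f(a⁰,b⁰)] FSD₁ [a¹, f(a¹,b⁰)]`;
(iii) `[a¹, f(a¹,b¹)] FSD₁ [a⁰, f(a⁰,b¹)]`. -/
theorem example_mixed_mechanism_BA :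
    (∀ (a b : Fin 2) (z : Fin 2), 0 < fEx a b z) ∧
    (∀ p q, prefEx p q ∨ prefEx q p) ∧
    (∀ p q s, prefEx p q → prefEx q s → prefEx p s) ∧
    (∃ p q : Fin 2 × Fin 2, p ≠ q ∧ prefEx p q ∧ prefEx q p) ∧
    fEx 0 0 = fEx 1 0 ∧
    FSD prefEx 0 (fEx 0 0) 1 (fEx 1 0) ∧
    FSD prefEx 1 (fEx 1 1) 0 (fEx 0 1) := by
  refine ⟨?_, ?_, ?_, ⟨(0,1),(1,0), by decide, by simp [prefEx], by simp [prefEx]⟩, ?_, ?_, ?_⟩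
  · intro a b z; fin_cases a <;> fin_cases b <;> fin_cases z <;> norm_num [fEx]
  · intro p q; unfold prefEx; omega
  · intro p q s; unfold prefEx; omega
  · funext z; fin_cases z <;> simp [fEx]
  · constructor
    · intro x z
      fin_cases x <;> fin_cases z <;>
        simp [phi, fEx, prefEx, Fin.sum_univ_two] <;> norm_num
    · exact ⟨0, 1, by simp [phi, fEx, prefEx, Fin.sum_univ_two]; norm_num⟩
  · constructor
    · intro x z
      fin_cases x <;> fin_cases z <;>
        simp [phi, fEx, prefEx, Fin.sum_univ_two] <;> norm_num
    · exact ⟨0, 1, by simp [phi, fEx, prefEx, Fin.sum_univ_two]; norm_num⟩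
end

section
/- In the queueing Groves mechanism, for any fixed report b_2 of patient 2 and any true cost θ_1 < b_2, patient 1's material payoff u_1^f(x_1, b_2) equals ū − θ_1 for all reports x_1 ≤ b_2 and equals ū − b_2 < ū − θ_1 for all reports x_1 > b_2; moreover, the total transfer to the clinic for x_1 ≤ b_2 equals x_1, which is uniquely maximized over [0, b_2] at x_1 = b_2. -/
open unitInterval

/-- Under the Groves mechanism with patient 2's report `b₂` and true cost `θ1 < b₂`:
patient 1's material payoff is `ū - θ1` for every report `x₁ ≤ b₂` and `ū - b₂ < ū - θ1`
for every report `x₁ > b₂`; and for `x₁ ≤ b₂` the clinic's revenue equals `x₁`, which is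
uniquely maximized over `[0, b₂]` at `x₁ = b₂`. -/
theorem groves_payoff_structure (θ1 u : ℝ) (hu : 0 < u)
    (b2 : unitInterval) (h0 : 0 < θ1) (hb : θ1 < (b2 : ℝ)) :
    (∀ x1 : unitInterval, (x1 : ℝ) ≤ (b2 : ℝ) →
        matPayoff1 θ1 u (groves x1 b2) = u - θ1 ∧
        totalTransfer (groves x1 b2) = (x1 : ℝ)) ∧
    (∀ x1 : unitInterval, (b2 : ℝ) < (x1 : ℝ) →
        matPayoff1 θ1 u (groves x1 b2) = u - (b2 : ℝ)) ∧
    u - (b2 : ℝ) < u - θ1 ∧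
    (∀ x1 : unitInterval, (x1 : ℝ) ≤ (b2 : ℝ) → x1 ≠ b2 →
        totalTransfer (groves x1 b2) < totalTransfer (groves b2 b2)) := by
  refine ⟨fun x1 hx => ?_, fun x1 hx => ?_, by linarith, fun x1 hx hne => ?_⟩
  · simp [groves, matPayoff1, totalTransfer, not_lt.2 hx]
  · simp [groves, matPayoff1, totalTransfer, hx]
  · have hlt : (x1 : ℝ) < (b2 : ℝ) :=
      lt_of_le_of_ne hx (fun h => hne (Subtype.ext h))
    simp only [groves, totalTransfer, if_neg (not_lt.2 hx), if_neg (lt_irrefl _)]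
    simpa using hlt
end
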